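/- Suppose Θ₁, Θ₂ are symmetric matrices satisfying Θ₁ = Q̄ + φ₀ᵀ Θ₁ φ₀ and Θ₂ = Q̄ + φ₁ᵀ Θ₂ φ₁, where φ₀ = φ₁ + Ψ with φ₁ᵀ Θ₁ Ψ = 0 and Ψᵀ Θ₁ φ₁ = 0, and ρ(φ₁) < 1. Then Θ₁ - Θ₂ = ∑_{j=0}^∞ (φ₁ᵀ)ʲ (Ψᵀ Θ₁ Ψ) φ₁ʲ, and in particular Θ₁ - Θ₂ is positive semidefinite whenever Θ₁ is positive semidefinite. -/

import Mathlib

/-!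
Expanding `φ₀ = φ₁ + Ψ`, the two orthogonality relations kill the cross terms, so
`φ₀ᵀ Θ₁ φ₀ = φ₁ᵀ Θ₁ φ₁ + Ψᵀ Θ₁ Ψ` and `Δ = Θ₁ - Θ₂` solves the Stein equation
`Δ = φ₁ᵀ Δ φ₁ + Ψᵀ Θ₁ Ψ`. Iterating it, `Δ` minus the `n`-th partial sum of the series is
`(φ₁ᵀ)ⁿ Δ φ₁ⁿ`. By Gelfand's formula `ρ(φ₁) < 1` makes `‖φ₁ⁿ‖` decay geometrically, so this
remainder tends to zero and the series converges absolutely to `Δ`. Its terms are congruences of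
`Ψᵀ Θ₁ Ψ`, hence positive semidefinite when `Θ₁` is, and the positive semidefinite cone is closed.
-/

open Matrix

noncomputable def specRad {N : Type*} [Fintype N] [DecidableEq N]
    (M : Matrix N N ℝ) : ENNReal :=
  spectralRadius ℂ (M.map (algebraMap ℝ ℂ))

open Filter Topology

theorem summable_norm_pow_of_spectralRadius_lt_one {A : Type*} [NormedRing A]
    [NormedAlgebra ℂ A] [CompleteSpace A] {a : A} (h : spectralRadius ℂ a < 1) :
    Summable fun n => ‖a ^ n‖ := by
  obtain ⟨r, hρr, hr1⟩ := ENNReal.lt_iff_exists_nnreal_btwn.mp h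
  refine .of_norm_bounded_eventually_nat
    (summable_geometric_of_lt_one r.2 (by exact_mod_cast hr1)) ?_
  filter_upwards
    [(spectrum.pow_nnnorm_pow_one_div_tendsto_nhds_spectralRadius a).eventually_lt_const hρr,
    eventually_gt_atTop 0] with n hn hn0
  rw [one_div, ENNReal.rpow_inv_lt_iff (by positivity), ENNReal.rpow_natCast] at hn
  rw [norm_norm, ← coe_nnnorm]
  exact_mod_cast hn.le

theorem sum_range_pow_mul_mul_pow_eq_sub {R : Type*} [Ring R] {a b c x : R}
    (hx : x = a * x * b + c) (n : ℕ) :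
    ∑ j ∈ Finset.range n, a ^ j * c * b ^ j = x - a ^ n * x * b ^ n := by
  induction n with
  | zero => simp
  | succ n ih =>
    rw [Finset.sum_range_succ, ih, eq_sub_of_add_eq' hx.symm, pow_succ, pow_succ']
    noncomm_ring

theorem hasSum_pow_mul_mul_pow_of_eq_mul_mul_add {R : Type*} [NormedRing R] [CompleteSpace R]
    {a b c x : R} (ha : Tendsto (fun n => a ^ n) atTop (𝓝 0))
    (hb : Summable fun n => ‖b ^ n‖) (hx : x = a * x * b + c) :
    HasSum (fun j => a ^ j * c * b ^ j) x := by
  have hsum : Summable fun j => a ^ j * c * b ^ j := by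
    refine .of_norm_bounded_eventually_nat (hb.mul_left ‖c‖) ?_
    filter_upwards [(tendsto_norm_zero.comp ha).eventually (ge_mem_nhds zero_lt_one)] with j hj
    calc ‖a ^ j * c * b ^ j‖ ≤ ‖a ^ j‖ * ‖c‖ * ‖b ^ j‖ := norm_mul₃_le
      _ ≤ 1 * ‖c‖ * ‖b ^ j‖ := by gcongr; exact hj
      _ = ‖c‖ * ‖b ^ j‖ := by rw [one_mul]
  have hb0 : Tendsto (fun n => b ^ n) atTop (𝓝 0) :=
    tendsto_zero_iff_norm_tendsto_zero.2 hb.tendsto_atTop_zero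
  rw [hsum.hasSum_iff_tendsto_nat, funext (sum_range_pow_mul_mul_pow_eq_sub hx)]
  simpa using tendsto_const_nhds.sub ((ha.mul_const x).mul hb0)

open scoped ComplexOrder in
theorem Matrix.PosSemidef.of_hasSum {ι n 𝕜 : Type*} [Fintype n] [RCLike 𝕜]
    {f : ι → Matrix n n 𝕜} {S : Matrix n n 𝕜} (hS : HasSum f S)
    (hf : ∀ i, (f i).PosSemidef) : S.PosSemidef := by
  refine .of_dotProduct_mulVec_nonneg ?_ fun x => ?_
  · have : HasSum f Sᴴ := by
      simpa only [(hf _).isHermitian.eq] using hS.matrix_conjTranspose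
    exact this.unique hS
  · let q : Matrix n n 𝕜 →+ 𝕜 :=
      { toFun := fun M => star x ⬝ᵥ M *ᵥ x
        map_zero' := by simp
        map_add' := fun M N => by simp [add_mulVec, dotProduct_add] }
    have hq : Continuous q :=
      continuous_const.dotProduct (continuous_id.matrix_mulVec continuous_const)
    exact (hS.map q hq).nonneg fun i => (hf i).dotProduct_mulVec_nonneg x

theorem Matrix.transpose_add_mul_mul_add_of_cross_eq_zero {n R : Type*} [Fintype n]
    [CommRing R] {φ Ψ Θ : Matrix n n R} (h₁ : φᵀ * Θ * Ψ = 0) (h₂ : Ψᵀ * Θ * φ = 0) :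
    (φ + Ψ)ᵀ * Θ * (φ + Ψ) = φᵀ * Θ * φ + Ψᵀ * Θ * Ψ := by
  simp only [transpose_add, add_mul, mul_add, h₁, h₂]
  abel

section Frobenius

-- Any submultiplicative norm would do; for the Frobenius norm transposition is an isometry.

attribute [local instance] Matrix.frobeniusNormedAddCommGroup Matrix.frobeniusNormedRing
  Matrix.frobeniusNormedAlgebra

theorem Matrix.summable_frobenius_norm_pow_of_specRad_lt_one {n : Type*} [Fintype n]
    [DecidableEq n] {φ : Matrix n n ℝ} (h : specRad φ < 1) : Summable fun k => ‖φ ^ k‖ := by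
  convert summable_norm_pow_of_spectralRadius_lt_one h using 2 with k
  rw [← Matrix.map_pow, frobenius_norm_map_eq]
  exact fun x => norm_algebraMap' ℂ x

theorem Matrix.hasSum_transpose_pow_mul_mul_pow_of_specRad_lt_one {n : Type*} [Fintype n]
    [DecidableEq n] {φ C Δ : Matrix n n ℝ} (hφ : specRad φ < 1) (hΔ : Δ = φᵀ * Δ * φ + C) :
    HasSum (fun j => φᵀ ^ j * C * φ ^ j) Δ := by
  have hsum := summable_frobenius_norm_pow_of_specRad_lt_one hφ
  refine hasSum_pow_mul_mul_pow_of_eq_mul_mul_add ?_ hsum hΔ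
  refine tendsto_zero_iff_norm_tendsto_zero.2 ?_
  simpa only [← transpose_pow, frobenius_norm_transpose] using hsum.tendsto_atTop_zero

end Frobenius

theorem stmt4_general {N : ℕ} (Qbar Θ₁ Θ₂ φ₀ φ₁ Ψ : Matrix (Fin N) (Fin N) ℝ)
    (hΘ₁ : Θ₁ = Qbar + φ₀ᵀ * Θ₁ * φ₀)
    (hΘ₂ : Θ₂ = Qbar + φ₁ᵀ * Θ₂ * φ₁)
    (hφ : φ₀ = φ₁ + Ψ)
    (horth₁ : φ₁ᵀ * Θ₁ * Ψ = 0) (horth₂ : Ψᵀ * Θ₁ * φ₁ = 0)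
    (hstab : specRad φ₁ < 1) :
    HasSum (fun j : ℕ => (φ₁ᵀ) ^ j * (Ψᵀ * Θ₁ * Ψ) * φ₁ ^ j) (Θ₁ - Θ₂) ∧
    (Θ₁.PosSemidef → (Θ₁ - Θ₂).PosSemidef) := by
  have hstein : Θ₁ - Θ₂ = φ₁ᵀ * (Θ₁ - Θ₂) * φ₁ + Ψᵀ * Θ₁ * Ψ := by
    have hsplit := transpose_add_mul_mul_add_of_cross_eq_zero horth₁ horth₂
    rw [← hφ] at hsplit
    calc Θ₁ - Θ₂ = φ₀ᵀ * Θ₁ * φ₀ - φ₁ᵀ * Θ₂ * φ₁ := by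
          conv_lhs => rw [hΘ₁, hΘ₂]
          abel
      _ = φ₁ᵀ * (Θ₁ - Θ₂) * φ₁ + Ψᵀ * Θ₁ * Ψ := by
          rw [hsplit, mul_sub, sub_mul]
          abel
  have hsum := hasSum_transpose_pow_mul_mul_pow_of_specRad_lt_one hstab hstein
  refine ⟨hsum, fun hΘ₁psd => PosSemidef.of_hasSum hsum fun j => ?_⟩
  have hΨ := hΘ₁psd.conjTranspose_mul_mul_same Ψ
  simpa only [conjTranspose_eq_transpose_of_trivial, transpose_pow, mul_assoc] using
    hΨ.conjTranspose_mul_mul_same (φ₁ ^ j)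

theorem stmt4 {N : ℕ} (Qbar Θ₁ Θ₂ φ₀ φ₁ Ψ : Matrix (Fin N) (Fin N) ℝ)
    (hQ : Qbar.IsSymm) (hΘ₁s : Θ₁.IsSymm) (hΘ₂s : Θ₂.IsSymm)
    (hΘ₁ : Θ₁ = Qbar + φ₀ᵀ * Θ₁ * φ₀)
    (hΘ₂ : Θ₂ = Qbar + φ₁ᵀ * Θ₂ * φ₁)
    (hφ : φ₀ = φ₁ + Ψ)
    (horth₁ : φ₁ᵀ * Θ₁ * Ψ = 0) (horth₂ : Ψᵀ * Θ₁ * φ₁ = 0)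
    (hstab : specRad φ₁ < 1) :
    HasSum (fun j : ℕ => (φ₁ᵀ) ^ j * (Ψᵀ * Θ₁ * Ψ) * φ₁ ^ j) (Θ₁ - Θ₂) ∧
    (Θ₁.PosSemidef → (Θ₁ - Θ₂).PosSemidef) :=
  stmt4_general Qbar Θ₁ Θ₂ φ₀ φ₁ Ψ hΘ₁ hΘ₂ hφ horth₁ horth₂ hstab
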